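/- arXiv:2205.12930 — 2 statements merged into one kernel-verified Lean document; each statement's English description precedes it below -/
import Mathlib

section
/- Let d ≥ 1, Λ ≥ 1, and let a : ℝ → (real symmetric d×d matrices) be measurable with Λ⁻¹|e|² ≤ e·a(t)e ≤ Λ|e|² for all t and e. Then there is a constant c > 0 depending only on d and Λ such that for every t > 0 and every w ∈ ℝ^d with |w| = 1, ∫₀ᵗ |M(s)w|² ds ≥ c·t³. -/
noncomputable section

open Real MeasureTheory Matrix Set
open scoped ENNReal

/-- Euclidean norm on `Fin d → ℝ`. -/
def eunorm {d : ℕ} (x : Fin d → ℝ) : ℝ := Real.sqrt (∑ i, (x i) ^ 2)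

/-- The moment matrices `A_i(t) = ∫₀ᵗ sⁱ a(s) ds`. -/
def Amat {d : ℕ} (a : ℝ → Matrix (Fin d) (Fin d) ℝ) (i : ℕ) (t : ℝ) :
    Matrix (Fin d) (Fin d) ℝ :=
  Matrix.of fun j k => ∫ s in Set.Ioc (0:ℝ) t, s ^ i * a s j k

/-- `P(t) = A₂(t) − A₁(t)A₀(t)⁻¹A₁(t)`. -/
def Pmat {d : ℕ} (a : ℝ → Matrix (Fin d) (Fin d) ℝ) (t : ℝ) : Matrix (Fin d) (Fin d) ℝ :=
  Amat a 2 t - Amat a 1 t * (Amat a 0 t)⁻¹ * Amat a 1 t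

/-- `M(t) = t·Id − A₀(t)⁻¹A₁(t)`. -/
def Mmat {d : ℕ} (a : ℝ → Matrix (Fin d) (Fin d) ℝ) (t : ℝ) : Matrix (Fin d) (Fin d) ℝ :=
  t • (1 : Matrix (Fin d) (Fin d) ℝ) - (Amat a 0 t)⁻¹ * Amat a 1 t

/-- The fundamental solution `Γ_a` of the `(x,v)`-homogeneous kinetic Fokker-Planck equation. -/
def Gam {d : ℕ} (a : ℝ → Matrix (Fin d) (Fin d) ℝ)
    (z : ℝ × (Fin d → ℝ) × (Fin d → ℝ)) : ℝ :=
  if 0 < z.1 then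
    (4 * π) ^ (-(d:ℝ)) * (Real.sqrt ((Amat a 0 z.1 * Pmat a z.1).det))⁻¹ *
      Real.exp (-(z.2.2 ⬝ᵥ ((Amat a 0 z.1)⁻¹).mulVec z.2.2) / 4 -
        ((z.2.1 - (Mmat a z.1).mulVec z.2.2) ⬝ᵥ
          ((Pmat a z.1)⁻¹).mulVec (z.2.1 - (Mmat a z.1).mulVec z.2.2)) / 4)
  else 0

/-- `a` is measurable (entrywise). -/
def MeasCoeff {d : ℕ} (a : ℝ → Matrix (Fin d) (Fin d) ℝ) : Prop :=
  ∀ j k, Measurable fun t => a t j k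

/-- `a(t)` is symmetric and uniformly elliptic: `Λ⁻¹|e|² ≤ e·a(t)e ≤ Λ|e|²`. -/
def Elliptic {d : ℕ} (Λ : ℝ) (a : ℝ → Matrix (Fin d) (Fin d) ℝ) : Prop :=
  ∀ t : ℝ, (a t).IsSymm ∧ ∀ e : Fin d → ℝ,
    Λ⁻¹ * (e ⬝ᵥ e) ≤ e ⬝ᵥ (a t).mulVec e ∧ e ⬝ᵥ (a t).mulVec e ≤ Λ * (e ⬝ᵥ e)

/-!
With `y = M(s)w`, the identity `A₀(s) M(s) = s A₀(s) − A₁(s) = ∫₀ˢ (s − r) a(r) dr` and ellipticity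
give `w·A₀(s)y ≥ Λ⁻¹ s² |w|² / 2`, while Cauchy–Schwarz for the form of `A₀(s) ≤ Λ s` bounds the
left side by `Λ s |w| |y|`. Hence `|M(s)w|² ≥ s² / (4Λ⁴)` for unit `w`, and integrating gives
`c = (12 Λ⁴)⁻¹`. The same coercivity of `A₀(s)` yields `|M(s)w|² ≲ s²`, which together with the
continuity of `M` on `(0, ∞)` makes the integrand integrable, so the integral is not a junk value.
-/

section QuadraticForms

variable {n : Type*} [Fintype n]

lemma dotProduct_self_nonneg (x : n → ℝ) : 0 ≤ x ⬝ᵥ x := by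
  simpa using dotProduct_star_self_nonneg x

lemma sq_dotProduct_mulVec_le {A : Matrix n n ℝ} (hA : A.IsSymm)
    (hA0 : ∀ x, 0 ≤ x ⬝ᵥ A *ᵥ x) (u v : n → ℝ) :
    (u ⬝ᵥ A *ᵥ v) ^ 2 ≤ (u ⬝ᵥ A *ᵥ u) * (v ⬝ᵥ A *ᵥ v) := by
  have hvu : v ⬝ᵥ A *ᵥ u = u ⬝ᵥ A *ᵥ v := by
    rw [dotProduct_mulVec, ← mulVec_transpose, hA.eq, dotProduct_comm]
  have hquad : ∀ c : ℝ,
      0 ≤ (v ⬝ᵥ A *ᵥ v) * (c * c) + 2 * (u ⬝ᵥ A *ᵥ v) * c + u ⬝ᵥ A *ᵥ u := by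
    intro c
    convert hA0 (u + c • v) using 1
    simp only [mulVec_add, mulVec_smul, dotProduct_add, add_dotProduct, dotProduct_smul,
      smul_dotProduct, smul_eq_mul, hvu]
    ring
  have hdisc := discrim_le_zero hquad
  rw [discrim] at hdisc
  nlinarith [hdisc]

lemma sq_dotProduct_mulVec_le_of_le {A : Matrix n n ℝ} (hA : A.IsSymm)
    (hA0 : ∀ x, 0 ≤ x ⬝ᵥ A *ᵥ x) {C : ℝ} (hAC : ∀ x, x ⬝ᵥ A *ᵥ x ≤ C * (x ⬝ᵥ x))
    (u v : n → ℝ) :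
    (u ⬝ᵥ A *ᵥ v) ^ 2 ≤ C ^ 2 * (u ⬝ᵥ u) * (v ⬝ᵥ v) := by
  calc (u ⬝ᵥ A *ᵥ v) ^ 2 ≤ (u ⬝ᵥ A *ᵥ u) * (v ⬝ᵥ A *ᵥ v) := sq_dotProduct_mulVec_le hA hA0 u v
    _ ≤ C * (u ⬝ᵥ u) * (C * (v ⬝ᵥ v)) := mul_le_mul (hAC u) (hAC v) (hA0 v) ((hA0 u).trans (hAC u))
    _ = C ^ 2 * (u ⬝ᵥ u) * (v ⬝ᵥ v) := by ring

lemma abs_apply_le_of_dotProduct_mulVec_le [DecidableEq n] {A : Matrix n n ℝ} (hA : A.IsSymm)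
    (hA0 : ∀ x, 0 ≤ x ⬝ᵥ A *ᵥ x) {C : ℝ} (hC : 0 ≤ C)
    (hAC : ∀ x, x ⬝ᵥ A *ᵥ x ≤ C * (x ⬝ᵥ x)) (j k : n) : |A j k| ≤ C := by
  have h := sq_dotProduct_mulVec_le_of_le hA hA0 hAC (Pi.single j 1) (Pi.single k 1)
  simp only [mulVec_single, single_dotProduct, one_mul, mul_one, Pi.single_eq_same] at h
  exact abs_le_of_sq_le_sq (by simpa using h) hC

lemma det_ne_zero_of_coercive [DecidableEq n] {A : Matrix n n ℝ} {m : ℝ} (hm : 0 < m)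
    (hA : ∀ x, m * (x ⬝ᵥ x) ≤ x ⬝ᵥ A *ᵥ x) : A.det ≠ 0 := by
  rintro hdet
  obtain ⟨v, hv, hAv⟩ := exists_mulVec_eq_zero_iff.2 hdet
  have := hA v
  rw [hAv, dotProduct_zero] at this
  exact hv (dotProduct_self_eq_zero.1 (le_antisymm (nonpos_of_mul_nonpos_right this hm)
    (dotProduct_self_nonneg v)))

lemma sq_mul_dotProduct_self_le_of_le_dotProduct_mulVec {A : Matrix n n ℝ} (hA : A.IsSymm)
    (hA0 : ∀ x, 0 ≤ x ⬝ᵥ A *ᵥ x) {C : ℝ} (hAC : ∀ x, x ⬝ᵥ A *ᵥ x ≤ C * (x ⬝ᵥ x))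
    {L : ℝ} (hL : 0 ≤ L) {u v : n → ℝ} (huv : L * (u ⬝ᵥ u) ≤ u ⬝ᵥ A *ᵥ v) :
    L ^ 2 * (u ⬝ᵥ u) ≤ C ^ 2 * (v ⬝ᵥ v) := by
  have hvv := dotProduct_self_nonneg v
  rcases (dotProduct_self_nonneg u).eq_or_lt with hu | hu
  · rw [← hu, mul_zero]
    positivity
  have hsq : (L * (u ⬝ᵥ u)) ^ 2 ≤ (u ⬝ᵥ A *ᵥ v) ^ 2 :=
    pow_le_pow_left₀ (mul_nonneg hL hu.le) huv 2
  have hCS := sq_dotProduct_mulVec_le_of_le hA hA0 hAC u v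
  refine le_of_mul_le_mul_right ?_ hu
  nlinarith

lemma dotProduct_sub_self_le (u v : n → ℝ) :
    (u - v) ⬝ᵥ (u - v) ≤ 2 * (u ⬝ᵥ u) + 2 * (v ⬝ᵥ v) := by
  have h := dotProduct_self_nonneg (u + v)
  simp only [add_dotProduct, dotProduct_add, sub_dotProduct, dotProduct_sub] at h ⊢
  linarith

end QuadraticForms

/-- `Amat a i t` is definitionally `momentMatrix a (· ^ i) (Ioc 0 t)`. -/
def momentMatrix {d : ℕ} (a : ℝ → Matrix (Fin d) (Fin d) ℝ) (φ : ℝ → ℝ) (S : Set ℝ) :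
    Matrix (Fin d) (Fin d) ℝ :=
  Matrix.of fun j k => ∫ r in S, φ r * a r j k

section Coefficient

variable {d : ℕ} {Λ : ℝ} {a : ℝ → Matrix (Fin d) (Fin d) ℝ}

lemma MeasCoeff.measurable_dotProduct_mulVec (hmeas : MeasCoeff a) (x : Fin d → ℝ) :
    Measurable fun t => x ⬝ᵥ a t *ᵥ x := by
  simp only [dotProduct, mulVec]
  have hentry : ∀ j k, Measurable fun t => a t j k := hmeas
  fun_prop

lemma Elliptic.dotProduct_mulVec_nonneg (hell : Elliptic Λ a) (hΛ : 0 < Λ) (t : ℝ)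
    (x : Fin d → ℝ) : 0 ≤ x ⬝ᵥ a t *ᵥ x :=
  (mul_nonneg (inv_nonneg.2 hΛ.le) (dotProduct_self_nonneg x)).trans ((hell t).2 x).1

lemma Elliptic.abs_apply_le (hell : Elliptic Λ a) (hΛ : 0 < Λ) (t : ℝ) (j k : Fin d) :
    |a t j k| ≤ Λ :=
  abs_apply_le_of_dotProduct_mulVec_le (hell t).1 (hell.dotProduct_mulVec_nonneg hΛ t) hΛ.le
    (fun x => ((hell t).2 x).2) j k

lemma Elliptic.abs_dotProduct_mulVec_le (hell : Elliptic Λ a) (hΛ : 0 < Λ) (t : ℝ)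
    (x : Fin d → ℝ) : |x ⬝ᵥ a t *ᵥ x| ≤ Λ * (x ⬝ᵥ x) := by
  rw [abs_of_nonneg (hell.dotProduct_mulVec_nonneg hΛ t x)]
  exact ((hell t).2 x).2

variable (hmeas : MeasCoeff a) (hell : Elliptic Λ a) (hΛ : 0 < Λ)
include hmeas hell hΛ

lemma integrableOn_mul_apply {φ : ℝ → ℝ} {S : Set ℝ} (hφ : IntegrableOn φ S) (j k : Fin d) :
    IntegrableOn (fun r => φ r * a r j k) S :=
  hφ.mul_bdd (hmeas j k).aestronglyMeasurable
    (Filter.Eventually.of_forall fun r => (hell.abs_apply_le hΛ r j k))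

lemma integrableOn_mul_dotProduct_mulVec {φ : ℝ → ℝ} {S : Set ℝ} (hφ : IntegrableOn φ S)
    (x : Fin d → ℝ) : IntegrableOn (fun r => φ r * (x ⬝ᵥ a r *ᵥ x)) S :=
  hφ.mul_bdd (hmeas.measurable_dotProduct_mulVec x).aestronglyMeasurable
    (Filter.Eventually.of_forall fun r => (hell.abs_dotProduct_mulVec_le hΛ r x))

lemma dotProduct_momentMatrix_mulVec {φ : ℝ → ℝ} {S : Set ℝ} (hφ : IntegrableOn φ S)
    (x : Fin d → ℝ) :
    x ⬝ᵥ momentMatrix a φ S *ᵥ x = ∫ r in S, φ r * (x ⬝ᵥ a r *ᵥ x) := by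
  have hint j k : IntegrableOn (fun r => x j * (φ r * a r j k) * x k) S :=
    ((integrableOn_mul_apply hmeas hell hΛ hφ j k).const_mul (x j)).mul_const (x k)
  calc x ⬝ᵥ momentMatrix a φ S *ᵥ x = ∑ j, ∑ k, ∫ r in S, x j * (φ r * a r j k) * x k := by
        simp only [dotProduct, mulVec, momentMatrix, of_apply, Finset.mul_sum]
        refine Finset.sum_congr rfl fun j _ => Finset.sum_congr rfl fun k _ => ?_
        rw [← integral_mul_const, ← integral_const_mul]
        congr 1 with r
        ring
    _ = ∫ r in S, ∑ j, ∑ k, x j * (φ r * a r j k) * x k := by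
        rw [integral_finsetSum _ fun j _ => integrable_finsetSum _ fun k _ => hint j k]
        exact Finset.sum_congr rfl fun j _ => (integral_finsetSum _ fun k _ => hint j k).symm
    _ = ∫ r in S, φ r * (x ⬝ᵥ a r *ᵥ x) := by
        congr 1 with r
        simp only [dotProduct, mulVec, Finset.mul_sum]
        exact Finset.sum_congr rfl fun j _ => Finset.sum_congr rfl fun k _ => by ring

end Coefficient

section Moments

variable {d : ℕ} {Λ : ℝ} {a : ℝ → Matrix (Fin d) (Fin d) ℝ}

lemma momentMatrix_isSymm (hell : Elliptic Λ a) (φ : ℝ → ℝ) (S : Set ℝ) :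
    (momentMatrix a φ S).IsSymm :=
  IsSymm.ext fun j k => by simp only [momentMatrix, of_apply, (hell _).1.apply]

lemma setIntegral_pow_Ioc {t : ℝ} (ht : 0 ≤ t) (i : ℕ) :
    ∫ r in Ioc 0 t, r ^ i = t ^ (i + 1) / (i + 1) := by
  rw [← intervalIntegral.integral_of_le ht, integral_pow]
  simp

variable (hmeas : MeasCoeff a) (hell : Elliptic Λ a) (hΛ : 0 < Λ)
include hmeas hell hΛ

lemma le_dotProduct_momentMatrix_mulVec {φ : ℝ → ℝ} {S : Set ℝ} (hS : MeasurableSet S)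
    (hφ : IntegrableOn φ S) (hφ0 : ∀ r ∈ S, 0 ≤ φ r) (x : Fin d → ℝ) :
    Λ⁻¹ * (∫ r in S, φ r) * (x ⬝ᵥ x) ≤ x ⬝ᵥ momentMatrix a φ S *ᵥ x := by
  rw [dotProduct_momentMatrix_mulVec hmeas hell hΛ hφ, mul_comm Λ⁻¹, mul_assoc,
    ← integral_mul_const]
  exact setIntegral_mono_on (hφ.mul_const _)
    (integrableOn_mul_dotProduct_mulVec hmeas hell hΛ hφ x) hS
    fun r hr => mul_le_mul_of_nonneg_left ((hell r).2 x).1 (hφ0 r hr)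

lemma dotProduct_momentMatrix_mulVec_le {φ : ℝ → ℝ} {S : Set ℝ} (hS : MeasurableSet S)
    (hφ : IntegrableOn φ S) (hφ0 : ∀ r ∈ S, 0 ≤ φ r) (x : Fin d → ℝ) :
    x ⬝ᵥ momentMatrix a φ S *ᵥ x ≤ Λ * (∫ r in S, φ r) * (x ⬝ᵥ x) := by
  rw [dotProduct_momentMatrix_mulVec hmeas hell hΛ hφ, mul_comm Λ, mul_assoc,
    ← integral_mul_const]
  exact setIntegral_mono_on (integrableOn_mul_dotProduct_mulVec hmeas hell hΛ hφ x)
    (hφ.mul_const _) hS fun r hr => mul_le_mul_of_nonneg_left ((hell r).2 x).2 (hφ0 r hr)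

lemma smul_Amat_zero_sub_Amat_one (s : ℝ) :
    s • Amat a 0 s - Amat a 1 s = momentMatrix a (fun r => s - r) (Ioc 0 s) := by
  ext j k
  have hint i := integrableOn_mul_apply hmeas hell hΛ
    ((continuous_pow i).integrableOn_Ioc (a := 0) (b := s)) j k
  simp only [Amat, momentMatrix, Matrix.sub_apply, Matrix.smul_apply, of_apply, smul_eq_mul]
  rw [← integral_const_mul, ← integral_sub ((hint 0).const_mul s) (hint 1)]
  congr 1 with r
  ring

variable {s : ℝ} (hs : 0 < s)
include hs

lemma le_dotProduct_Amat_mulVec (i : ℕ) (x : Fin d → ℝ) :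
    Λ⁻¹ * (s ^ (i + 1) / (i + 1)) * (x ⬝ᵥ x) ≤ x ⬝ᵥ Amat a i s *ᵥ x := by
  rw [← setIntegral_pow_Ioc hs.le]
  exact le_dotProduct_momentMatrix_mulVec hmeas hell hΛ measurableSet_Ioc
    (continuous_pow i).integrableOn_Ioc (fun r hr => pow_nonneg hr.1.le i) x

lemma dotProduct_Amat_mulVec_le (i : ℕ) (x : Fin d → ℝ) :
    x ⬝ᵥ Amat a i s *ᵥ x ≤ Λ * (s ^ (i + 1) / (i + 1)) * (x ⬝ᵥ x) := by
  rw [← setIntegral_pow_Ioc hs.le]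
  exact dotProduct_momentMatrix_mulVec_le hmeas hell hΛ measurableSet_Ioc
    (continuous_pow i).integrableOn_Ioc (fun r hr => pow_nonneg hr.1.le i) x

lemma isUnit_det_Amat_zero : IsUnit (Amat a 0 s).det :=
  isUnit_iff_ne_zero.2 <| det_ne_zero_of_coercive (mul_pos (inv_pos.2 hΛ) hs)
    (by simpa using le_dotProduct_Amat_mulVec hmeas hell hΛ hs 0)

lemma dotProduct_Amat_mulVec_nonneg (i : ℕ) (x : Fin d → ℝ) : 0 ≤ x ⬝ᵥ Amat a i s *ᵥ x :=
  le_trans (by have := dotProduct_self_nonneg x; positivity)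
    (le_dotProduct_Amat_mulVec hmeas hell hΛ hs i x)

lemma le_dotProduct_smul_Amat_zero_sub_Amat_one_mulVec (x : Fin d → ℝ) :
    Λ⁻¹ * (s ^ 2 / 2) * (x ⬝ᵥ x) ≤ x ⬝ᵥ (s • Amat a 0 s - Amat a 1 s) *ᵥ x := by
  have hφ : IntegrableOn (fun r => s - r) (Ioc 0 s) := (continuous_sub_left s).integrableOn_Ioc
  have hφ_int : ∫ r in Ioc 0 s, (s - r) = s ^ 2 / 2 := by
    rw [← intervalIntegral.integral_of_le hs.le,
      intervalIntegral.integral_comp_sub_left (fun r => r)]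
    simp
  rw [smul_Amat_zero_sub_Amat_one hmeas hell hΛ, ← hφ_int]
  exact le_dotProduct_momentMatrix_mulVec hmeas hell hΛ measurableSet_Ioc hφ
    (fun r hr => sub_nonneg.2 hr.2) x

end Moments

section Continuity

variable {d : ℕ} {Λ : ℝ} {a : ℝ → Matrix (Fin d) (Fin d) ℝ}
  (hmeas : MeasCoeff a) (hell : Elliptic Λ a) (hΛ : 0 < Λ)
include hmeas hell hΛ

lemma continuousOn_Amat (i : ℕ) : ContinuousOn (Amat a i) (Ioi 0) := by
  refine continuousOn_pi.2 fun j => continuousOn_pi.2 fun k => ?_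
  have hprim : Continuous fun t => ∫ r in 0..t, r ^ i * a r j k :=
    intervalIntegral.continuous_primitive (fun u v => (intervalIntegrable_iff.2
      (integrableOn_mul_apply hmeas hell hΛ (continuous_pow i).integrableOn_uIoc j k))) 0
  exact hprim.continuousOn.congr fun t ht => by
    simp [Amat, intervalIntegral.integral_of_le (le_of_lt ht)]

lemma continuousOn_Mmat : ContinuousOn (Mmat a) (Ioi 0) := by
  refine continuousOn_of_forall_continuousAt fun s hs => ?_
  have hA i : ContinuousAt (Amat a i) s := (continuousOn_Amat hmeas hell hΛ i).continuousAt
    (Ioi_mem_nhds hs)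
  have hdet := (isUnit_det_Amat_zero hmeas hell hΛ hs).ne_zero
  have hinv : ContinuousAt Inv.inv (Amat a 0 s) :=
    continuousAt_matrix_inv _ (by simpa [Ring.inverse_eq_inv'] using continuousAt_inv₀ hdet)
  exact (continuousAt_id.smul continuousAt_const).sub ((hinv.comp (hA 0)).mul (hA 1))

end Continuity

section MBounds

variable {d : ℕ} {Λ : ℝ} {a : ℝ → Matrix (Fin d) (Fin d) ℝ}
  (hmeas : MeasCoeff a) (hell : Elliptic Λ a) (hΛ : 0 < Λ) {s : ℝ} (hs : 0 < s)
include hmeas hell hΛ hs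

lemma Amat_zero_mul_Mmat : Amat a 0 s * Mmat a s = s • Amat a 0 s - Amat a 1 s := by
  rw [Mmat, Matrix.mul_sub, Matrix.mul_smul, Matrix.mul_one, ← Matrix.mul_assoc,
    mul_nonsing_inv _ (isUnit_det_Amat_zero hmeas hell hΛ hs), Matrix.one_mul]

lemma sq_mul_dotProduct_self_le_dotProduct_Mmat_mulVec (w : Fin d → ℝ) :
    s ^ 2 * (w ⬝ᵥ w) ≤ 4 * Λ ^ 4 * (Mmat a s *ᵥ w ⬝ᵥ Mmat a s *ᵥ w) := by
  have hA0 : ∀ x, x ⬝ᵥ Amat a 0 s *ᵥ x ≤ (Λ * s) * (x ⬝ᵥ x) := by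
    simpa using dotProduct_Amat_mulVec_le hmeas hell hΛ hs 0
  have hL : Λ⁻¹ * (s ^ 2 / 2) * (w ⬝ᵥ w) ≤ w ⬝ᵥ Amat a 0 s *ᵥ (Mmat a s *ᵥ w) := by
    rw [mulVec_mulVec, Amat_zero_mul_Mmat hmeas hell hΛ hs]
    exact le_dotProduct_smul_Amat_zero_sub_Amat_one_mulVec hmeas hell hΛ hs w
  have h := sq_mul_dotProduct_self_le_of_le_dotProduct_mulVec (momentMatrix_isSymm hell _ _)
    (dotProduct_Amat_mulVec_nonneg hmeas hell hΛ hs 0) hA0 (by positivity) hL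
  refine le_of_mul_le_mul_right ?_ (by positivity : 0 < s ^ 2 / (4 * Λ ^ 2))
  calc s ^ 2 * (w ⬝ᵥ w) * (s ^ 2 / (4 * Λ ^ 2)) = (Λ⁻¹ * (s ^ 2 / 2)) ^ 2 * (w ⬝ᵥ w) := by
        field_simp; ring
    _ ≤ (Λ * s) ^ 2 * (Mmat a s *ᵥ w ⬝ᵥ Mmat a s *ᵥ w) := h
    _ = _ := by field_simp

lemma dotProduct_Mmat_mulVec_le (w : Fin d → ℝ) :
    Mmat a s *ᵥ w ⬝ᵥ Mmat a s *ᵥ w ≤ (2 + Λ ^ 4) * s ^ 2 * (w ⬝ᵥ w) := by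
  set z := (Amat a 0 s)⁻¹ *ᵥ (Amat a 1 s *ᵥ w)
  have hMw : Mmat a s *ᵥ w = s • w - z := by
    rw [Mmat, sub_mulVec, smul_mulVec, one_mulVec, ← mulVec_mulVec]
  have hA1 : ∀ x, x ⬝ᵥ Amat a 1 s *ᵥ x ≤ (Λ * (s ^ 2 / 2)) * (x ⬝ᵥ x) := by
    simpa [one_add_one_eq_two] using dotProduct_Amat_mulVec_le hmeas hell hΛ hs 1
  have hL : Λ⁻¹ * s * (z ⬝ᵥ z) ≤ z ⬝ᵥ Amat a 1 s *ᵥ w := by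
    have hAz : Amat a 0 s *ᵥ z = Amat a 1 s *ᵥ w := by
      rw [mulVec_mulVec, mul_nonsing_inv _ (isUnit_det_Amat_zero hmeas hell hΛ hs), one_mulVec]
    simpa [hAz] using le_dotProduct_Amat_mulVec hmeas hell hΛ hs 0 z
  have h := sq_mul_dotProduct_self_le_of_le_dotProduct_mulVec (momentMatrix_isSymm hell _ _)
    (dotProduct_Amat_mulVec_nonneg hmeas hell hΛ hs 1) hA1 (by positivity) hL
  have hz : z ⬝ᵥ z ≤ Λ ^ 4 * s ^ 2 / 4 * (w ⬝ᵥ w) := by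
    refine le_of_mul_le_mul_right ?_ (by positivity : 0 < s ^ 2 / Λ ^ 2)
    calc z ⬝ᵥ z * (s ^ 2 / Λ ^ 2) = (Λ⁻¹ * s) ^ 2 * (z ⬝ᵥ z) := by field_simp
      _ ≤ (Λ * (s ^ 2 / 2)) ^ 2 * (w ⬝ᵥ w) := h
      _ = _ := by field_simp; ring
  have hww := dotProduct_self_nonneg w
  calc Mmat a s *ᵥ w ⬝ᵥ Mmat a s *ᵥ w ≤ 2 * (s • w ⬝ᵥ s • w) + 2 * (z ⬝ᵥ z) :=
        hMw ▸ dotProduct_sub_self_le _ _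
    _ ≤ (2 + Λ ^ 4) * s ^ 2 * (w ⬝ᵥ w) := by
        simp only [smul_dotProduct, dotProduct_smul, smul_eq_mul]
        nlinarith [mul_nonneg (by positivity : 0 ≤ Λ ^ 4 * s ^ 2) hww]

end MBounds

lemma eunorm_sq {d : ℕ} (x : Fin d → ℝ) : eunorm x ^ 2 = x ⬝ᵥ x := by
  rw [eunorm, sq_sqrt (Finset.sum_nonneg fun i _ => sq_nonneg _)]
  simp [dotProduct, sq]

lemma integrableOn_dotProduct_Mmat_mulVec {d : ℕ} {Λ : ℝ} {a : ℝ → Matrix (Fin d) (Fin d) ℝ}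
    (hmeas : MeasCoeff a) (hell : Elliptic Λ a) (hΛ : 0 < Λ) (t : ℝ) (w : Fin d → ℝ) :
    IntegrableOn (fun s => Mmat a s *ᵥ w ⬝ᵥ Mmat a s *ᵥ w) (Ioc 0 t) := by
  have hcont : ContinuousOn (fun s => Mmat a s *ᵥ w ⬝ᵥ Mmat a s *ᵥ w) (Ioc 0 t) :=
    ((continuous_id.matrix_mulVec continuous_const).dotProduct
      (continuous_id.matrix_mulVec continuous_const)).comp_continuousOn
      ((continuousOn_Mmat hmeas hell hΛ).mono Ioc_subset_Ioi_self)
  refine IntegrableOn.of_bound measure_Ioc_lt_top (hcont.aestronglyMeasurable measurableSet_Ioc)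
    ((2 + Λ ^ 4) * t ^ 2 * (w ⬝ᵥ w)) (ae_restrict_of_forall_mem measurableSet_Ioc fun s hs => ?_)
  rw [Real.norm_of_nonneg (dotProduct_self_nonneg _)]
  refine (dotProduct_Mmat_mulVec_le hmeas hell hΛ hs.1 w).trans ?_
  have := dotProduct_self_nonneg w
  gcongr
  exacts [hs.1.le, hs.2]

theorem M_integral_lower_bound_general (d : ℕ) (Λ : ℝ) (hΛ : 1 ≤ Λ) :
    ∃ c : ℝ, 0 < c ∧
      ∀ (a : ℝ → Matrix (Fin d) (Fin d) ℝ), MeasCoeff a → Elliptic Λ a →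
      ∀ t : ℝ, 0 < t → ∀ w : Fin d → ℝ, eunorm w = 1 →
        c * t ^ 3 ≤ ∫ s in Set.Ioc (0:ℝ) t, (eunorm ((Mmat a s).mulVec w)) ^ 2 := by
  have hΛ0 : 0 < Λ := zero_lt_one.trans_le hΛ
  refine ⟨(12 * Λ ^ 4)⁻¹, by positivity, fun a hmeas hell t ht w hw => ?_⟩
  have hww : w ⬝ᵥ w = 1 := by rw [← eunorm_sq, hw, one_pow]
  simp only [eunorm_sq]
  calc (12 * Λ ^ 4)⁻¹ * t ^ 3 = ∫ s in Ioc 0 t, (4 * Λ ^ 4)⁻¹ * s ^ 2 := by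
        rw [integral_const_mul, setIntegral_pow_Ioc ht.le]
        field_simp
        ring
    _ ≤ ∫ s in Ioc 0 t, Mmat a s *ᵥ w ⬝ᵥ Mmat a s *ᵥ w := by
        refine setIntegral_mono_on
          (((continuous_pow 2).integrableOn_Ioc (a := 0) (b := t)).const_mul _)
          (integrableOn_dotProduct_Mmat_mulVec hmeas hell hΛ0 t w) measurableSet_Ioc
          fun s hs => ?_
        rw [inv_mul_le_iff₀ (by positivity)]
        simpa [hww] using sq_mul_dotProduct_self_le_dotProduct_Mmat_mulVec hmeas hell hΛ0 hs.1 w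

/-- **The key lower bound `∫₀ᵗ |M(s)w|² ds ≳ t³`** (estimate (2.23)).  The constant `c`
depends only on `d` and `Λ`. -/
theorem M_integral_lower_bound (d : ℕ) (hd : 1 ≤ d) (Λ : ℝ) (hΛ : 1 ≤ Λ) :
    ∃ c : ℝ, 0 < c ∧
      ∀ (a : ℝ → Matrix (Fin d) (Fin d) ℝ), MeasCoeff a → Elliptic Λ a →
      ∀ t : ℝ, 0 < t → ∀ w : Fin d → ℝ, eunorm w = 1 →
        c * t ^ 3 ≤ ∫ s in Set.Ioc (0:ℝ) t, (eunorm ((Mmat a s).mulVec w)) ^ 2 :=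
  M_integral_lower_bound_general d Λ hΛ
end
end

section
/- Fix d ≥ 1, α ∈ (0,1), θ > 0, and r > 0. Let u : B_r(0) ⊆ ℝ^d → ℝ be twice continuously differentiable with [u]_{log(1/C)^{−θ}(B_r)} < ∞ and [D²u]_{C^{α}(B_r)} < ∞. Then there is a constant C depending only on d, α, θ such that for every ε ∈ (0, min(r, 1/2)): sup_{B_r} |D²u| ≤ C·( (log(1/ε))^{−θ} ε^{−2} [u]_{log(1/C)^{−θ}(B_r)} + ε^{α} [D²u]_{C^{α}(B_r)} ). -/
noncomputable section

open Real Set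

/-- Frobenius norm of a matrix (a fixed matrix norm). -/
def frob {d : ℕ} (M : Matrix (Fin d) (Fin d) ℝ) : ℝ := Real.sqrt (∑ i, ∑ j, (M i j) ^ 2)

/-- The Hessian `D²u` of a function on `ℝ^d`. -/
def hessD {d : ℕ} (u : (Fin d → ℝ) → ℝ) (v : Fin d → ℝ) : Matrix (Fin d) (Fin d) ℝ :=
  Matrix.of fun i j =>
    fderiv ℝ (fun w => fderiv ℝ u w (Pi.single j 1)) v (Pi.single i 1)

/-!
Restricted to a segment `w ± x` in the ball, second-order Taylor expansion and the Hölder bound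
on `D²u` give `|D²u(w)[x,x] - (u(w+x) + u(w-x) - 2u(w))| ≤ 2 |x|² Kh |x|^α`, while the log-Hölder
bound gives `|u(w+x) + u(w-x) - 2u(w)| ≤ 2 Kl log(1/|x|)^(-θ)`. Polarizing with
`x = (ε/2)(eᵢ ± eⱼ)` bounds every entry of `D²u(w)` by `4 (Kl log(1/ε)^(-θ) ε⁻² + Kh ε^α)`.
To keep these segments inside `B_r`, the estimate is proved at a point `w` with `B̄_ε(w) ⊆ B_r`
and `|v - w| ≤ ε`, and carried back to `v` by the Hölder bound on `D²u` once more.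
-/

lemma abs_sub_taylor_two_le {g g' g'' : ℝ → ℝ} {B : ℝ}
    (hg : ∀ t ∈ Icc (0 : ℝ) 1, HasDerivAt g (g' t) t)
    (hg' : ∀ t ∈ Icc (0 : ℝ) 1, HasDerivAt g' (g'' t) t)
    (hB : ∀ t ∈ Icc (0 : ℝ) 1, |g'' t - g'' 0| ≤ B) :
    |g 1 - g 0 - g' 0 - g'' 0 / 2| ≤ B := by
  have hB0 : 0 ≤ B := by simpa using hB 0 (left_mem_Icc.mpr zero_le_one)
  have hg'_taylor : ∀ t ∈ Icc (0 : ℝ) 1, |g' t - g' 0 - t * g'' 0| ≤ B := by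
    have hmvt := norm_image_sub_le_of_norm_deriv_le_segment'
      (f := fun t => g' t - t * g'' 0) (f' := fun t => g'' t - g'' 0)
      (fun t ht => ((hg' t ht).sub ((hasDerivAt_id t).mul_const _)).hasDerivWithinAt.congr_deriv
        (by simp))
      (fun t ht => hB t (Ico_subset_Icc_self ht))
    intro t ht
    calc |g' t - g' 0 - t * g'' 0| = ‖g' t - t * g'' 0 - (g' 0 - 0 * g'' 0)‖ := by
          rw [Real.norm_eq_abs]; ring_nf
      _ ≤ B * (t - 0) := hmvt t ht
      _ ≤ B := by rw [sub_zero]; exact mul_le_of_le_one_right hB0 ht.2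
  have hmvt := norm_image_sub_le_of_norm_deriv_le_segment'
    (f := fun t => g t - t * g' 0 - t ^ 2 / 2 * g'' 0)
    (f' := fun t => g' t - g' 0 - t * g'' 0)
    (fun t ht => (((hg t ht).sub ((hasDerivAt_id t).mul_const _)).sub
      (((hasDerivAt_pow 2 t).div_const 2).mul_const _)).hasDerivWithinAt.congr_deriv
        (by simp))
    (fun t ht => hg'_taylor t (Ico_subset_Icc_self ht)) 1 (right_mem_Icc.mpr zero_le_one)
  simp only [Real.norm_eq_abs] at hmvt
  convert hmvt using 2 <;> ring

section SecondDifference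

variable {E : Type*} [NormedAddCommGroup E] [NormedSpace ℝ E] {u : E → ℝ} {x e : E} {B : ℝ}

lemma abs_sub_taylor_two_fderiv_le (hu : ∀ t ∈ Icc (0 : ℝ) 1, ContDiffAt ℝ 2 u (x + t • e))
    (hB : ∀ t ∈ Icc (0 : ℝ) 1,
      |fderiv ℝ (fderiv ℝ u) (x + t • e) e e - fderiv ℝ (fderiv ℝ u) x e e| ≤ B) :
    |u (x + e) - u x - fderiv ℝ u x e - fderiv ℝ (fderiv ℝ u) x e e / 2| ≤ B := by
  have hline (t : ℝ) : HasDerivAt (fun s : ℝ => x + s • e) e t := by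
    simpa using ((hasDerivAt_id t).smul_const e).const_add x
  have hg (t) (ht : t ∈ Icc (0 : ℝ) 1) :
      HasDerivAt (fun s : ℝ => u (x + s • e)) (fderiv ℝ u (x + t • e) e) t :=
    ((hu t ht).differentiableAt two_ne_zero).hasFDerivAt.comp_hasDerivAt t (hline t)
  have hg' (t) (ht : t ∈ Icc (0 : ℝ) 1) :
      HasDerivAt (fun s : ℝ => fderiv ℝ u (x + s • e) e)
        (fderiv ℝ (fderiv ℝ u) (x + t • e) e e) t := by
    have hdiff : DifferentiableAt ℝ (fderiv ℝ u) (x + t • e) :=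
      ((hu t ht).fderiv_right (m := 1) le_rfl).differentiableAt one_ne_zero
    exact ((ContinuousLinearMap.apply ℝ ℝ e).hasFDerivAt.comp _ hdiff.hasFDerivAt).comp_hasDerivAt
      t (hline t)
  simpa using abs_sub_taylor_two_le hg hg' (by simpa using hB)

lemma abs_fderiv_fderiv_apply_le_second_diff
    (hu : ∀ t ∈ Icc (-1 : ℝ) 1, ContDiffAt ℝ 2 u (x + t • e))
    (hB : ∀ t ∈ Icc (-1 : ℝ) 1,
      |fderiv ℝ (fderiv ℝ u) (x + t • e) e e - fderiv ℝ (fderiv ℝ u) x e e| ≤ B) :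
    |fderiv ℝ (fderiv ℝ u) x e e| ≤ |u (x + e) - u x| + |u (x - e) - u x| + 2 * B := by
  have hsmul_neg (t : ℝ) : x + t • -e = x + (-t) • e := by rw [smul_neg, neg_smul]
  have hfwd := abs_sub_taylor_two_fderiv_le (u := u) (x := x) (e := e)
    (fun t ht => hu t ⟨by linarith [ht.1], ht.2⟩) (fun t ht => hB t ⟨by linarith [ht.1], ht.2⟩)
  have hbwd := abs_sub_taylor_two_fderiv_le (u := u) (x := x) (e := -e)
    (fun t ht => hsmul_neg t ▸ hu (-t) ⟨by linarith [ht.2], by linarith [ht.1]⟩)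
    (fun t ht => by simpa [hsmul_neg t] using hB (-t) ⟨by linarith [ht.2], by linarith [ht.1]⟩)
  simp only [map_neg, neg_apply, neg_neg, ← sub_eq_add_neg] at hbwd
  have hf := abs_le.mp hfwd
  have hb := abs_le.mp hbwd
  exact abs_le.mpr
    ⟨by linarith [neg_abs_le (u (x + e) - u x), neg_abs_le (u (x - e) - u x)],
      by linarith [le_abs_self (u (x + e) - u x), le_abs_self (u (x - e) - u x)]⟩

end SecondDifference

lemma log_one_div_rpow_neg_le {θ s t : ℝ} (hθ : 0 ≤ θ) (hs : 0 < s) (hst : s ≤ t) (ht : t < 1) :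
    log (1 / s) ^ (-θ) ≤ log (1 / t) ^ (-θ) :=
  Real.rpow_le_rpow_of_nonpos (Real.log_pos (one_lt_one_div (hs.trans_le hst) ht))
    (Real.log_le_log (one_div_pos.mpr (hs.trans_le hst)) (one_div_le_one_div_of_le hs hst))
    (neg_nonpos.mpr hθ)

lemma log_one_div_rpow_neg_pos (θ : ℝ) {ε : ℝ} (hε : 0 < ε) (hε' : ε < 1) :
    0 < log (1 / ε) ^ (-θ) :=
  Real.rpow_pos_of_pos (Real.log_pos (one_lt_one_div hε hε')) _

section Euclidean

variable {d : ℕ}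

lemma eunorm_eq_norm (x : Fin d → ℝ) : eunorm x = ‖WithLp.toLp 2 x‖ := by
  simp [eunorm, EuclideanSpace.norm_eq]

lemma eunorm_nonneg (x : Fin d → ℝ) : 0 ≤ eunorm x := Real.sqrt_nonneg _

lemma eunorm_zero : eunorm (0 : Fin d → ℝ) = 0 := by simp [eunorm]

lemma eunorm_add_le (x y : Fin d → ℝ) : eunorm (x + y) ≤ eunorm x + eunorm y := by
  simpa only [eunorm_eq_norm, WithLp.toLp_add] using norm_add_le _ _

lemma eunorm_smul (t : ℝ) (x : Fin d → ℝ) : eunorm (t • x) = |t| * eunorm x := by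
  simp only [eunorm_eq_norm, WithLp.toLp_smul, norm_smul, Real.norm_eq_abs]

lemma eunorm_neg (x : Fin d → ℝ) : eunorm (-x) = eunorm x := by
  simp only [eunorm_eq_norm, WithLp.toLp_neg, norm_neg]

lemma eunorm_pos {x : Fin d → ℝ} : 0 < eunorm x ↔ x ≠ 0 := by
  simp [eunorm_eq_norm]

lemma eunorm_single (i : Fin d) : eunorm (Pi.single i (1 : ℝ)) = 1 := by
  simp [eunorm_eq_norm]

lemma frob_eq_norm (M : Matrix (Fin d) (Fin d) ℝ) :
    frob M = ‖WithLp.toLp 2 (fun p : Fin d × Fin d => M p.1 p.2)‖ := by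
  simp [frob, EuclideanSpace.norm_eq, Fintype.sum_prod_type]

lemma exists_closedBall_subset_near {r ε : ℝ} (hε : 0 ≤ ε) (hεr : ε < r) {v : Fin d → ℝ}
    (hv : eunorm v < r) : ∃ w, eunorm (v - w) ≤ ε ∧ ∀ y, eunorm (y - w) ≤ ε → eunorm y < r := by
  have hr : 0 < r := hε.trans_lt hεr
  have hc : 0 < 1 - ε / r := by rw [sub_pos, div_lt_one hr]; exact hεr
  refine ⟨(1 - ε / r) • v, ?_, fun y hy => ?_⟩
  · rw [show v - (1 - ε / r) • v = (ε / r) • v by module, eunorm_smul,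
      abs_of_nonneg (by positivity), div_mul_comm]
    exact mul_le_of_le_one_left hε ((div_le_one hr).mpr hv.le)
  · calc eunorm y ≤ eunorm (y - (1 - ε / r) • v) + eunorm ((1 - ε / r) • v) := by
          simpa using eunorm_add_le (y - (1 - ε / r) • v) ((1 - ε / r) • v)
      _ < ε + (1 - ε / r) * r := by
          rw [eunorm_smul, abs_of_pos hc]
          exact add_lt_add_of_le_of_lt hy (mul_lt_mul_of_pos_left hv hc)
      _ = r := by field_simp; ring

end Euclidean

open Matrix

section Frobenius

variable {d : ℕ}

lemma frob_le_frob_sub_add (X Y : Matrix (Fin d) (Fin d) ℝ) : frob X ≤ frob (X - Y) + frob Y := by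
  have hX : (fun p : Fin d × Fin d => X p.1 p.2)
      = (fun p => (X - Y) p.1 p.2) + fun p => Y p.1 p.2 := by
    ext p; simp
  simpa only [frob_eq_norm, hX, WithLp.toLp_add] using norm_add_le _ _

lemma frob_le_of_forall_abs_le {M : Matrix (Fin d) (Fin d) ℝ} {E : ℝ} (hE : 0 ≤ E)
    (h : ∀ i j, |M i j| ≤ E) : frob M ≤ d * E := by
  have hsum : ∑ i, ∑ j, M i j ^ 2 ≤ ((d : ℝ) * E) ^ 2 := calc
    ∑ i, ∑ j, M i j ^ 2 ≤ ∑ _i : Fin d, ∑ _j : Fin d, E ^ 2 := by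
      refine Finset.sum_le_sum fun i _ => Finset.sum_le_sum fun j _ => ?_
      exact sq_le_sq' (abs_le.mp (h i j)).1 (abs_le.mp (h i j)).2
    _ = ((d : ℝ) * E) ^ 2 := by simp; ring
  exact Real.sqrt_le_iff.mpr ⟨by positivity, hsum⟩

lemma abs_dotProduct_mulVec_le (M : Matrix (Fin d) (Fin d) ℝ) (x : Fin d → ℝ) :
    |x ⬝ᵥ M *ᵥ x| ≤ eunorm x ^ 2 * frob M := by
  have hxx : eunorm x ^ 2 = ‖WithLp.toLp 2 (fun p : Fin d × Fin d => x p.1 * x p.2)‖ := by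
    simp only [eunorm, EuclideanSpace.norm_eq, Real.norm_eq_abs, sq_abs, mul_pow,
      Fintype.sum_prod_type, ← Finset.sum_mul_sum]
    rw [Real.sq_sqrt (by positivity), Real.sqrt_mul_self (by positivity)]
  have hq : x ⬝ᵥ M *ᵥ x = inner ℝ (WithLp.toLp 2 (fun p : Fin d × Fin d => x p.1 * x p.2))
      (WithLp.toLp 2 (fun p : Fin d × Fin d => M p.1 p.2)) := by
    simp [PiLp.inner_apply, dotProduct, mulVec, Fintype.sum_prod_type, Finset.mul_sum,
      mul_left_comm]
  rw [hq, hxx, frob_eq_norm]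
  exact abs_real_inner_le_norm _ _

end Frobenius

lemma Matrix.IsSymm.abs_apply_le_of_abs_quadratic_le {d : ℕ} {M : Matrix (Fin d) (Fin d) ℝ}
    (hM : M.IsSymm) {ε K : ℝ} (hε : 0 < ε) (hK : ∀ x, eunorm x ≤ ε → |x ⬝ᵥ M *ᵥ x| ≤ K)
    (i j : Fin d) : |M i j| ≤ 2 * K / ε ^ 2 := by
  set a : Fin d → ℝ := (ε / 2) • Pi.single i 1
  set b : Fin d → ℝ := (ε / 2) • Pi.single j 1
  have hhalf (k : Fin d) : eunorm ((ε / 2) • Pi.single k (1 : ℝ)) = ε / 2 := by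
    rw [eunorm_smul, eunorm_single, mul_one, abs_of_pos (half_pos hε)]
  have hab : eunorm (a + b) ≤ ε := by linarith [eunorm_add_le a b, hhalf i, hhalf j]
  have hab' : eunorm (a - b) ≤ ε := by
    rw [sub_eq_add_neg]; linarith [eunorm_add_le a (-b), eunorm_neg b, hhalf i, hhalf j]
  have hpol : (a + b) ⬝ᵥ M *ᵥ (a + b) - (a - b) ⬝ᵥ M *ᵥ (a - b) = ε ^ 2 * M i j := by
    have hji : M j i = M i j := hM.apply i j
    simp [a, b, mulVec_add, mulVec_sub, add_dotProduct, dotProduct_add, sub_dotProduct,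
      dotProduct_sub, mulVec_smul, hji]
    ring
  rw [le_div_iff₀ (pow_pos hε 2)]
  calc |M i j| * ε ^ 2 = |(a + b) ⬝ᵥ M *ᵥ (a + b) - (a - b) ⬝ᵥ M *ᵥ (a - b)| := by
        rw [hpol, abs_mul, abs_of_pos (pow_pos hε 2), mul_comm]
    _ ≤ 2 * K := (abs_sub _ _).trans (by linarith [hK _ hab, hK _ hab'])

section Hessian

variable {d : ℕ} {u : (Fin d → ℝ) → ℝ} {w : Fin d → ℝ}

lemma hessD_apply (hu : ContDiffAt ℝ 2 u w) (i j : Fin d) :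
    hessD u w i j = fderiv ℝ (fderiv ℝ u) w (Pi.single i 1) (Pi.single j 1) := by
  have hdiff : DifferentiableAt ℝ (fderiv ℝ u) w :=
    (hu.fderiv_right (m := 1) le_rfl).differentiableAt one_ne_zero
  rw [hessD, Matrix.of_apply, fderiv_clm_apply hdiff (differentiableAt_const _)]
  simp

lemma isSymm_hessD (hu : ContDiffAt ℝ 2 u w) : (hessD u w).IsSymm := by
  ext i j
  rw [Matrix.transpose_apply, hessD_apply hu, hessD_apply hu]
  exact hu.isSymmSndFDerivAt (by simp) _ _

lemma fderiv_fderiv_apply_eq_dotProduct_hessD (hu : ContDiffAt ℝ 2 u w) (x : Fin d → ℝ) :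
    fderiv ℝ (fderiv ℝ u) w x x = x ⬝ᵥ hessD u w *ᵥ x := by
  have hmat : hessD u w = LinearMap.toMatrix₂' ℝ
      (ContinuousLinearMap.toLinearMap₁₂ (fderiv ℝ (fderiv ℝ u) w)) := by
    ext i j
    rw [hessD_apply hu, LinearMap.toMatrix₂'_apply,
      ContinuousLinearMap.toLinearMap₁₂_apply_apply_apply]
  rw [hmat, ← Matrix.toLinearMap₂'_apply', Matrix.toLinearMap₂'_toMatrix',
    ContinuousLinearMap.toLinearMap₁₂_apply_apply_apply]

end Hessian

section HolderBounds

variable {d : ℕ} {u : (Fin d → ℝ) → ℝ} {r θ α Kl Kh ε : ℝ} {w : Fin d → ℝ}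

def LogHolderOnBallWith (K θ r : ℝ) (u : (Fin d → ℝ) → ℝ) : Prop :=
  ∀ v v' : Fin d → ℝ, eunorm v < r → eunorm v' < r →
    0 < eunorm (v - v') → eunorm (v - v') < 1 / 2 →
    |u v - u v'| ≤ K * Real.log (1 / eunorm (v - v')) ^ (-θ)

def HessianHolderOnBallWith (K α r : ℝ) (u : (Fin d → ℝ) → ℝ) : Prop :=
  ∀ v v' : Fin d → ℝ, eunorm v < r → eunorm v' < r → v ≠ v' →
    frob (hessD u v - hessD u v') ≤ K * eunorm (v - v') ^ α

lemma nonneg_of_holderOnBallWith (hd : 1 ≤ d) (hε : 0 < ε) (hε' : ε < 1 / 2)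
    (hball : ∀ y, eunorm (y - w) ≤ ε → eunorm y < r)
    (hl : LogHolderOnBallWith Kl θ r u) (hh : HessianHolderOnBallWith Kh α r u) :
    0 ≤ Kl ∧ 0 ≤ Kh := by
  set w' := w + ε • Pi.single (⟨0, hd⟩ : Fin d) 1
  have hdist : eunorm (w' - w) = ε := by
    rw [add_sub_cancel_left, eunorm_smul, eunorm_single, abs_of_pos hε, mul_one]
  have hw : eunorm w < r := hball w (by rw [sub_self, eunorm_zero]; exact hε.le)
  have hw' : eunorm w' < r := hball w' hdist.le
  have hne : w' ≠ w := by
    rw [← sub_ne_zero, ← eunorm_pos, hdist]; exact hε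
  constructor
  · refine nonneg_of_mul_nonneg_left ((abs_nonneg _).trans (hl w' w hw' hw ?_ ?_)) ?_
    all_goals rw [hdist]
    exacts [hε, hε', log_one_div_rpow_neg_pos θ hε (by linarith)]
  · refine nonneg_of_mul_nonneg_left ((Real.sqrt_nonneg _).trans (hh w' w hw' hw hne)) ?_
    rw [hdist]; exact Real.rpow_pos_of_pos hε _

lemma HessianHolderOnBallWith.frob_sub_le (hh : HessianHolderOnBallWith Kh α r u) (hKh : 0 ≤ Kh)
    {y z : Fin d → ℝ} (hy : eunorm y < r) (hz : eunorm z < r) :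
    frob (hessD u y - hessD u z) ≤ Kh * eunorm (y - z) ^ α := by
  rcases eq_or_ne y z with rfl | hyz
  · simpa [frob] using mul_nonneg hKh (Real.rpow_nonneg (eunorm_nonneg _) α)
  · exact hh y z hy hz hyz

lemma HessianHolderOnBallWith.abs_quadratic_sub_le (hh : HessianHolderOnBallWith Kh α r u)
    (hKh : 0 ≤ Kh) {y z : Fin d → ℝ} (hy : eunorm y < r) (hz : eunorm z < r) (x : Fin d → ℝ) :
    |x ⬝ᵥ hessD u y *ᵥ x - x ⬝ᵥ hessD u z *ᵥ x| ≤ eunorm x ^ 2 * (Kh * eunorm (y - z) ^ α) := by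
  rw [← dotProduct_sub, ← sub_mulVec]
  exact (abs_dotProduct_mulVec_le _ x).trans
    (mul_le_mul_of_nonneg_left (hh.frob_sub_le hKh hy hz) (sq_nonneg _))

lemma abs_quadratic_hessD_le (hθ : 0 ≤ θ) (hα : 0 ≤ α) (hKl : 0 ≤ Kl) (hKh : 0 ≤ Kh)
    (hε : 0 < ε) (hε' : ε < 1 / 2) (hball : ∀ y, eunorm (y - w) ≤ ε → eunorm y < r)
    (hu : ∀ v, eunorm v < r → ContDiffAt ℝ 2 u v)
    (hl : LogHolderOnBallWith Kl θ r u) (hh : HessianHolderOnBallWith Kh α r u)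
    {x : Fin d → ℝ} (hx : eunorm x ≤ ε) :
    |x ⬝ᵥ hessD u w *ᵥ x| ≤ 2 * Kl * log (1 / ε) ^ (-θ) + 2 * (ε ^ 2 * (Kh * ε ^ α)) := by
  have hL := log_one_div_rpow_neg_pos θ hε (by linarith)
  rcases eq_or_ne x 0 with rfl | hx0
  · simp only [zero_dotProduct, abs_zero]
    positivity
  have hx_pos : 0 < eunorm x := eunorm_pos.mpr hx0
  have hw : eunorm w < r := hball w (by rw [sub_self, eunorm_zero]; exact hε.le)
  have hstep (t : ℝ) (ht : t ∈ Icc (-1 : ℝ) 1) : eunorm (t • x) ≤ ε := by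
    rw [eunorm_smul]
    exact (mul_le_of_le_one_left (eunorm_nonneg x) (abs_le.mpr ht)).trans hx
  have hseg (t : ℝ) (ht : t ∈ Icc (-1 : ℝ) 1) : eunorm (w + t • x) < r :=
    hball _ (by rw [add_sub_cancel_left]; exact hstep t ht)
  have hincr (y : Fin d → ℝ) (hy : eunorm y < r) (hyw : eunorm (y - w) = eunorm x) :
      |u y - u w| ≤ Kl * log (1 / ε) ^ (-θ) := by
    refine (hl y w hy hw (hyw ▸ hx_pos) (by linarith)).trans ?_
    rw [hyw]
    exact mul_le_mul_of_nonneg_left (log_one_div_rpow_neg_le hθ hx_pos hx (by linarith)) hKl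
  have hsecond := abs_fderiv_fderiv_apply_le_second_diff (u := u) (x := w) (e := x)
    (B := ε ^ 2 * (Kh * ε ^ α)) (fun t ht => hu _ (hseg t ht)) (fun t ht => by
      rw [fderiv_fderiv_apply_eq_dotProduct_hessD (hu _ (hseg t ht)),
        fderiv_fderiv_apply_eq_dotProduct_hessD (hu w hw)]
      refine (hh.abs_quadratic_sub_le hKh (hseg t ht) hw x).trans ?_
      rw [add_sub_cancel_left]
      have := Real.rpow_nonneg (eunorm_nonneg (t • x)) α
      gcongr
      exacts [eunorm_nonneg _, hstep t ht])
  rw [fderiv_fderiv_apply_eq_dotProduct_hessD (hu w hw)] at hsecond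
  have h₁ := hincr (w + x) (by simpa using hseg 1 (right_mem_Icc.mpr (by norm_num)))
    (by rw [add_sub_cancel_left])
  have h₂ := hincr (w - x)
    (by simpa [sub_eq_add_neg] using hseg (-1) (left_mem_Icc.mpr (by norm_num)))
    (by rw [sub_sub_cancel_left, eunorm_neg])
  linarith

lemma abs_hessD_apply_le (hθ : 0 ≤ θ) (hα : 0 ≤ α) (hKl : 0 ≤ Kl) (hKh : 0 ≤ Kh)
    (hε : 0 < ε) (hε' : ε < 1 / 2) (hball : ∀ y, eunorm (y - w) ≤ ε → eunorm y < r)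
    (hu : ∀ v, eunorm v < r → ContDiffAt ℝ 2 u v)
    (hl : LogHolderOnBallWith Kl θ r u) (hh : HessianHolderOnBallWith Kh α r u) (i j : Fin d) :
    |hessD u w i j| ≤ 4 * (Kl * log (1 / ε) ^ (-θ) / ε ^ 2 + Kh * ε ^ α) := by
  have hw : eunorm w < r := hball w (by rw [sub_self, eunorm_zero]; exact hε.le)
  refine ((isSymm_hessD (hu w hw)).abs_apply_le_of_abs_quadratic_le hε
    (fun x hx => abs_quadratic_hessD_le hθ hα hKl hKh hε hε' hball hu hl hh hx) i j).trans_eq ?_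
  field_simp
  ring

end HolderBounds

/-- **log-Hölder interpolation inequality** (Lemma 4.9).  Here `Kl` bounds the log-Hölder
seminorm `[u]_{log(1/C)^{−θ}(B_r)}` and `Kh` bounds the Hölder seminorm
`[D²u]_{C^α(B_r)}`; the constant `C` depends only on `d`, `α`, `θ`. -/
theorem log_holder_interpolation (d : ℕ) (hd : 1 ≤ d) (α θ : ℝ)
    (hα : α ∈ Set.Ioo (0:ℝ) 1) (hθ : 0 < θ) :
    ∃ C : ℝ, 0 < C ∧
      ∀ (r : ℝ) (u : (Fin d → ℝ) → ℝ) (Kl Kh : ℝ), 0 < r →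
        -- `u` is twice continuously differentiable on `B_r`
        (∀ v : Fin d → ℝ, eunorm v < r → ContDiffAt ℝ 2 u v) →
        -- `[u]_{log(1/C)^{−θ}(B_r)} ≤ Kl`
        (∀ v v' : Fin d → ℝ, eunorm v < r → eunorm v' < r →
          0 < eunorm (v - v') → eunorm (v - v') < 1/2 →
          |u v - u v'| ≤ Kl * Real.log (1 / eunorm (v - v')) ^ (-θ)) →
        -- `[D²u]_{C^α(B_r)} ≤ Kh`
        (∀ v v' : Fin d → ℝ, eunorm v < r → eunorm v' < r → v ≠ v' →
          frob (hessD u v - hessD u v') ≤ Kh * eunorm (v - v') ^ α) →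
        ∀ ε : ℝ, 0 < ε → ε < min r (1/2) →
          ∀ v : Fin d → ℝ, eunorm v < r →
            frob (hessD u v) ≤
              C * (Real.log (1/ε) ^ (-θ) * ε ^ (-2:ℝ) * Kl + ε ^ α * Kh) := by
  refine ⟨4 * d + 1, by positivity, fun r u Kl Kh _ hu hl hh ε hε hεr v hv => ?_⟩
  obtain ⟨hεr, hε'⟩ := lt_min_iff.mp hεr
  obtain ⟨w, hvw, hball⟩ := exists_closedBall_subset_near hε.le hεr hv
  obtain ⟨hKl, hKh⟩ := nonneg_of_holderOnBallWith hd hε hε' hball hl hh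
  have hw : eunorm w < r := hball w (by rw [sub_self, eunorm_zero]; exact hε.le)
  have hnear : frob (hessD u v - hessD u w) ≤ Kh * ε ^ α :=
    (HessianHolderOnBallWith.frob_sub_le hh hKh hv hw).trans
      (by gcongr; exacts [eunorm_nonneg _, hα.1.le])
  set A := Kl * log (1 / ε) ^ (-θ) / ε ^ 2
  have hA : 0 ≤ A := by
    have := log_one_div_rpow_neg_pos θ hε (by linarith : ε < 1)
    positivity
  calc frob (hessD u v) ≤ frob (hessD u v - hessD u w) + frob (hessD u w) :=
        frob_le_frob_sub_add _ _
    _ ≤ Kh * ε ^ α + d * (4 * (A + Kh * ε ^ α)) :=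
        add_le_add hnear (frob_le_of_forall_abs_le (by positivity)
          (abs_hessD_apply_le hθ.le hα.1.le hKl hKh hε hε' hball hu hl hh))
    _ ≤ (4 * d + 1) * (A + Kh * ε ^ α) := by nlinarith
    _ = (4 * d + 1) * (Real.log (1/ε) ^ (-θ) * ε ^ (-2:ℝ) * Kl + ε ^ α * Kh) := by
        rw [Real.rpow_neg hε.le, Real.rpow_two]
        ring
end
end
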